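/- Let n ≥ 1 and let ζ : ℝ → (0,∞) be continuous and strictly decreasing with ∫₀^∞ ζ(t) dt < ∞. Then δ_ζ^H(u,v) = ∫₀^∞ d̂_H({x : ζ(u(x)) ≥ s}, {x : ζ(v(x)) ≥ s}) ds defines a finite metric on Conv_c(ℝⁿ). -/

import Mathlib

open MeasureTheory Filter Topology Set
open scoped Classical ENNReal

noncomputable section

abbrev En (n : ℕ) := EuclideanSpace ℝ (Fin n)

/-- `ζ` applied to an extended real value, with the convention `ζ (+∞) = 0`. -/
def zeval (ζ : ℝ → ℝ) (t : EReal) : ℝ := if t = ⊤ then 0 else ζ t.toReal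

/-- The epigraph of an extended-real-valued function. -/
def epiSet {n : ℕ} (u : En n → EReal) : Set (En n × ℝ) := {p | u p.1 ≤ (p.2 : EReal)}

/-- `Conv_c(ℝⁿ)`: proper, lower semicontinuous, convex, coercive functions with
values in `ℝ ∪ {+∞}`. -/
def ConvC (n : ℕ) (u : En n → EReal) : Prop :=
  (∀ x, u x ≠ ⊥) ∧ (∃ x, u x ≠ ⊤) ∧ LowerSemicontinuous u ∧
    Convex ℝ (epiSet u) ∧ Tendsto u (cocompact (En n)) (𝓝 ⊤)

/-- `Conv_c^{(n)}(ℝⁿ)`: members of `Conv_c(ℝⁿ)` with full-dimensional domain. -/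
def ConvCd (n : ℕ) (u : En n → EReal) : Prop :=
  ConvC n u ∧ (interior {x | u x ≠ ⊤}).Nonempty

/-- Epi-convergence of a sequence of extended-real-valued functions. -/
def EpiTendsto {n : ℕ} (u : ℕ → En n → EReal) (v : En n → EReal) : Prop :=
  ∀ x : En n,
    (∀ y : ℕ → En n, Tendsto y atTop (𝓝 x) →
      v x ≤ Filter.liminf (fun k => u k (y k)) atTop) ∧
    (∃ y : ℕ → En n, Tendsto y atTop (𝓝 x) ∧
      Filter.limsup (fun k => u k (y k)) atTop ≤ v x)

/-- Super-coercivity: `u x / ‖x‖ → +∞` as `‖x‖ → ∞`. -/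
def SuperCoercive {n : ℕ} (u : En n → EReal) : Prop :=
  ∀ M : ℝ, ∀ᶠ x in cocompact (En n), ((M * ‖x‖ : ℝ) : EReal) ≤ u x

/-- The functional `δ_{ζ,p}`. -/
def deltaZP {n : ℕ} (ζ : ℝ → ℝ) (p : ℝ) (u v : En n → EReal) : ℝ :=
  (∫ x : En n, |zeval ζ (u x) - zeval ζ (v x)| ^ p) ^ (1 / p)

/-- The functional `δ_{ζ,1} = δ_ζ`. -/
def delta1 {n : ℕ} (ζ : ℝ → ℝ) (u v : En n → EReal) : ℝ :=
  ∫ x : En n, |zeval ζ (u x) - zeval ζ (v x)|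

/-- `f` applied to an extended real value with the convention `f (+∞) = +∞`. -/
def emap (f : ℝ → ℝ) (t : EReal) : EReal := if t = ⊤ then ⊤ else ((f t.toReal : ℝ) : EReal)

/-- The (convex) indicator function `I^∞_K + t`. -/
def indE {n : ℕ} (K : Set (En n)) (t : ℝ) : En n → EReal :=
  fun x => if x ∈ K then (t : EReal) else ⊤

/-- Nondegenerate parallelotope: Minkowski sum of `n` linearly independent segments. -/
def IsParallelotope {n : ℕ} (P : Set (En n)) : Prop :=
  ∃ (z : En n) (b : Fin n → En n), LinearIndependent ℝ b ∧
    P = (fun c : Fin n → ℝ => z + ∑ i, c i • b i) '' (Set.univ.pi fun _ => Set.Icc (0:ℝ) 1)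

/-- Convex body with nonempty interior. -/
def IsConvexBodyI {n : ℕ} (K : Set (En n)) : Prop :=
  IsCompact K ∧ Convex ℝ K ∧ (interior K).Nonempty

/-- Convex body: nonempty compact convex set. -/
def IsCB {n : ℕ} (K : Set (En n)) : Prop := K.Nonempty ∧ IsCompact K ∧ Convex ℝ K

/-- The extension `d̂_H` of the Hausdorff metric to `K(ℝⁿ) ∪ {∅}`. -/
def dhatH {n : ℕ} (K L : Set (En n)) : ℝ :=
  if K = ∅ then (if L = ∅ then 0 else max 1 (Metric.hausdorffDist L {0}))
  else if L = ∅ then max 1 (Metric.hausdorffDist K {0})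
  else Metric.hausdorffDist K L

/-- The functional `δ_ζ^H`. -/
def deltaH {n : ℕ} (ζ : ℝ → ℝ) (u v : En n → EReal) : ℝ :=
  ∫ s in Set.Ioi (0:ℝ), dhatH {x | s ≤ zeval ζ (u x)} {x | s ≤ zeval ζ (v x)}

/-- The Legendre–Fenchel conjugate. -/
def conjF {n : ℕ} (u : En n → EReal) : En n → EReal :=
  fun y => ⨆ x : En n, (((inner ℝ x y : ℝ) : EReal) - u x)

/-- The admissible set in the definition of the Hausdorff-type metric `δ` of Section 5.2:
`λ > 0` such that `‖u^* - v^*‖_{∞, (1/λ)Bⁿ} ≤ λ`. -/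
def DSet {n : ℕ} (u v : En n → EReal) : Set ℝ :=
  {l : ℝ | 0 < l ∧ ∀ x : En n, ‖x‖ ≤ 1 / l →
    conjF u x ≤ conjF v x + (l : EReal) ∧ conjF v x ≤ conjF u x + (l : EReal)}

/-- The Hausdorff-type metric `δ` of Section 5.2. -/
def deltaStar {n : ℕ} (u v : En n → EReal) : ℝ := sInf (DSet u v)

/-!
For `s > 0` the superlevel set `{ζ ∘ u ≥ s}` is the sublevel set `{u ≤ ζ⁻¹ s}`: it is closed
since `u` is lower semicontinuous, and bounded since a coercive convex function grows at least
linearly, `u x ≥ a ‖x‖ + b`. That bound puts `{ζ ∘ u ≥ s}` in a ball of radius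
`(|{t > 0 | ζ t ≥ s}| - b) / a`, and by the layer-cake formula
`∫₀^∞ |{t > 0 | ζ t ≥ s}| ds = ∫₀^∞ ζ < ∞`; past `s = ζ b` the set is empty. So the integrand is
dominated by an integrable function; it is measurable because the Hausdorff distance of two
monotone families of sets is a countable supremum of monotone functions. The metric axioms then
hold level by level, and `δ(u, v) = 0` forces equal superlevel sets for almost every, hence every,
`s > 0`; these determine `ζ ∘ u`, hence `u` as `ζ` is injective.
-/

open Metric Bornology

section HausdorffDistance

variable {X : Type*} [PseudoEMetricSpace X]

theorem hausdorffEDist_eq_iSup_of_denseRange {ι : Type*} {q : ι → X} (hq : DenseRange q)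
    (A B : Set X) :
    hausdorffEDist A B =
      ⨆ i, (infEDist (q i) A - infEDist (q i) B) ⊔ (infEDist (q i) B - infEDist (q i) A) := by
  set S := ⨆ i, (infEDist (q i) A - infEDist (q i) B) ⊔ (infEDist (q i) B - infEDist (q i) A)
  have key : ∀ {C D : Set X}, (∀ i, infEDist (q i) D - infEDist (q i) C ≤ S) →
      ∀ x ∈ C, infEDist x D ≤ S := by
    intro C D h x hx
    -- both sides are continuous in `x`, so the inequality passes from `range q` to its closure
    have : infEDist x D ≤ infEDist x C + S :=
      hq.induction_on x (isClosed_le continuous_infEDist (continuous_infEDist.add continuous_const))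
        fun i => tsub_le_iff_left.1 (h i)
    simpa [infEDist_zero_of_mem hx] using this
  refine le_antisymm (hausdorffEDist_le_of_infEDist (key fun i => ?_) (key fun i => ?_))
    (iSup_le fun i => sup_le ?_ ?_)
  · exact le_iSup_of_le i le_sup_right
  · exact le_iSup_of_le i le_sup_left
  · rw [tsub_le_iff_left, hausdorffEDist_comm]
    exact infEDist_le_infEDist_add_hausdorffEDist
  · rw [tsub_le_iff_left]
    exact infEDist_le_infEDist_add_hausdorffEDist

theorem hausdorffDist_le_two_mul_of_subset_closedBall {Y : Type*} [PseudoMetricSpace Y]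
    {K L : Set Y} {c : Y} {ρ : ℝ} (hρ : 0 ≤ ρ) (hK : K ⊆ closedBall c ρ) (hL : L ⊆ closedBall c ρ)
    (hK' : K.Nonempty) (hL' : L.Nonempty) : hausdorffDist K L ≤ 2 * ρ :=
  (hausdorffDist_le_diam hK' (isBounded_closedBall.subset hK) hL'
    (isBounded_closedBall.subset hL)).trans
    ((diam_mono (union_subset hK hL) isBounded_closedBall).trans (diam_closedBall hρ))

theorem measurable_hausdorffEDist_of_antitone [TopologicalSpace.SeparableSpace X] {β : Type*}
    [LinearOrder β] [TopologicalSpace β] [OrderClosedTopology β] [MeasurableSpace β]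
    [BorelSpace β] {A B : β → Set X} (hA : Antitone A) (hB : Antitone B) :
    Measurable fun s => hausdorffEDist (A s) (B s) := by
  obtain ⟨D, hDc, hD⟩ := TopologicalSpace.exists_countable_dense X
  have : Countable D := hDc.to_subtype
  simp_rw [hausdorffEDist_eq_iSup_of_denseRange hD.denseRange_val]
  refine Measurable.iSup fun x => ?_
  have hA' : Measurable fun s => infEDist (x : X) (A s) :=
    Monotone.measurable fun _ _ hst => infEDist_anti (hA hst)
  have hB' : Measurable fun s => infEDist (x : X) (B s) :=
    Monotone.measurable fun _ _ hst => infEDist_anti (hB hst)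
  exact (hA'.sub hB').sup (hB'.sub hA')

end HausdorffDistance

section ExtendedHausdorff

variable {n : ℕ}

theorem dhatH_nonneg (K L : Set (En n)) : 0 ≤ dhatH K L := by
  unfold dhatH
  split_ifs
  · exact le_rfl
  all_goals first | exact le_max_of_le_left zero_le_one | exact hausdorffDist_nonneg

theorem dhatH_comm (K L : Set (En n)) : dhatH K L = dhatH L K := by
  unfold dhatH
  split_ifs <;> simp_all [hausdorffDist_comm]

theorem dhatH_self (K : Set (En n)) : dhatH K K = 0 := by
  unfold dhatH
  split_ifs <;> simp

theorem eq_of_dhatH_eq_zero {K L : Set (En n)} (hKc : IsClosed K) (hLc : IsClosed L)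
    (hKb : IsBounded K) (hLb : IsBounded L) (h : dhatH K L = 0) : K = L := by
  unfold dhatH at h
  split_ifs at h with hK hL hL
  · rw [hK, hL]
  · linarith [le_max_left 1 (hausdorffDist L {(0 : En n)})]
  · linarith [le_max_left 1 (hausdorffDist K {(0 : En n)})]
  · have := (hausdorffDist_zero_iff_closure_eq_closure
      (hausdorffEDist_ne_top_of_nonempty_of_bounded (nonempty_iff_ne_empty.2 hK)
        (nonempty_iff_ne_empty.2 hL) hKb hLb)).1 h
    rwa [hKc.closure_eq, hLc.closure_eq] at this

theorem dhatH_triangle {K L M : Set (En n)} (hKb : IsBounded K) (hLb : IsBounded L)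
    (hMb : IsBounded M) : dhatH K M ≤ dhatH K L + dhatH L M := by
  have tri : ∀ {A B C : Set (En n)}, A ≠ ∅ → B ≠ ∅ → IsBounded A → IsBounded B →
      hausdorffDist A C ≤ hausdorffDist A B + hausdorffDist B C := fun hA hB hAb hBb =>
    hausdorffDist_triangle (hausdorffEDist_ne_top_of_nonempty_of_bounded
      (nonempty_iff_ne_empty.2 hA) (nonempty_iff_ne_empty.2 hB) hAb hBb)
  have h0 : ({0} : Set (En n)) ≠ ∅ := singleton_ne_empty 0
  have h0b : IsBounded ({0} : Set (En n)) := isBounded_singleton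
  have toEmpty : ∀ {A B : Set (En n)}, A ≠ ∅ → B ≠ ∅ → IsBounded A → IsBounded B →
      max 1 (hausdorffDist B {0}) ≤ hausdorffDist B A + max 1 (hausdorffDist A {0}) := by
    intro A B hA hB hAb hBb
    refine max_le ?_ ((tri hB hA hBb hAb).trans (by gcongr; exact le_max_right _ _))
    linarith [le_max_left 1 (hausdorffDist A {0}), hausdorffDist_nonneg (s := B) (t := A)]
  unfold dhatH
  by_cases hK : K = ∅ <;> by_cases hL : L = ∅ <;> by_cases hM : M = ∅ <;>
    simp only [hK, hL, hM, if_true, if_false, le_refl, zero_add, add_zero]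
  · exact add_nonneg (le_max_of_le_left zero_le_one) (le_max_of_le_left zero_le_one)
  · linarith [toEmpty hL hM hLb hMb, hausdorffDist_comm (s := M) (t := L)]
  · refine (tri hK h0 hKb h0b).trans (add_le_add (le_max_right _ _) ?_)
    rw [hausdorffDist_comm]
    exact le_max_right _ _
  · exact toEmpty hL hK hLb hKb
  · exact tri hK hL hKb hLb

theorem dhatH_le_of_subset_closedBall {K L : Set (En n)} {ρ : ℝ} (hρ : 0 ≤ ρ)
    (hK : K ⊆ closedBall 0 ρ) (hL : L ⊆ closedBall 0 ρ) : dhatH K L ≤ 1 + 2 * ρ := by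
  have h0 : {(0 : En n)} ⊆ closedBall 0 ρ := singleton_subset_iff.2 (mem_closedBall_self hρ)
  have toZero : ∀ {A : Set (En n)}, A ⊆ closedBall 0 ρ → A ≠ ∅ →
      max 1 (hausdorffDist A {0}) ≤ 1 + 2 * ρ := fun hA hA' => max_le (by linarith)
    ((hausdorffDist_le_two_mul_of_subset_closedBall hρ hA h0 (nonempty_iff_ne_empty.2 hA')
      (singleton_nonempty 0)).trans (by linarith))
  unfold dhatH
  split_ifs with hK' hL' hL'
  · linarith
  · exact toZero hL hL'
  · exact toZero hK hK'
  · exact (hausdorffDist_le_two_mul_of_subset_closedBall hρ hK hL (nonempty_iff_ne_empty.2 hK')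
      (nonempty_iff_ne_empty.2 hL')).trans (by linarith)

theorem measurable_dhatH_of_antitone {β : Type*} [LinearOrder β] [TopologicalSpace β]
    [OrderClosedTopology β] [MeasurableSpace β] [BorelSpace β] {A B : β → Set (En n)}
    (hA : Antitone A) (hB : Antitone B) : Measurable fun s => dhatH (A s) (B s) := by
  have hempty : ∀ {C : β → Set (En n)}, Antitone C → MeasurableSet {s | C s = ∅} :=
    fun hC => (IsUpperSet.ordConnected fun _ _ hst hs =>
      subset_empty_iff.1 (hs ▸ hC hst)).measurableSet
  have hdist : ∀ {C D : β → Set (En n)}, Antitone C → Antitone D →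
      Measurable fun s => hausdorffDist (C s) (D s) :=
    fun hC hD => (measurable_hausdorffEDist_of_antitone hC hD).ennreal_toReal
  unfold dhatH
  exact Measurable.ite (hempty hA)
    (Measurable.ite (hempty hB) measurable_const (measurable_const.max (hdist hB antitone_const)))
    (Measurable.ite (hempty hB) (measurable_const.max (hdist hA antitone_const)) (hdist hA hB))

end ExtendedHausdorff

section Weight

variable {ζ : ℝ → ℝ}

@[simp] theorem zeval_coe (ζ : ℝ → ℝ) (r : ℝ) : zeval ζ r = ζ r := by simp [zeval]

@[simp] theorem zeval_top (ζ : ℝ → ℝ) : zeval ζ ⊤ = 0 := by simp [zeval]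

theorem zeval_nonneg (hζ : ∀ t, 0 ≤ ζ t) (t : EReal) : 0 ≤ zeval ζ t := by
  unfold zeval
  split_ifs
  exacts [le_rfl, hζ _]

theorem le_zeval_iff {s : ℝ} (hs : 0 < s) {t : EReal} (ht : t ≠ ⊥) :
    s ≤ zeval ζ t ↔ ∃ r : ℝ, t = r ∧ s ≤ ζ r := by
  induction t using EReal.rec with
  | bot => exact absurd rfl ht
  | coe r => simp
  | top => simp [hs.not_ge]

theorem zeval_injOn (hpos : ∀ t, 0 < ζ t) (hinj : Function.Injective ζ) :
    InjOn (zeval ζ) {t | t ≠ ⊥} := by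
  intro t ht t' ht' h
  induction t using EReal.rec <;> induction t' using EReal.rec
  all_goals simp_all [(hpos _).ne, (hpos _).ne', hinj.eq_iff]

def levelLength (ζ : ℝ → ℝ) (s : ℝ) : ℝ := (volume.restrict (Ioi 0) {t | s ≤ ζ t}).toReal

theorem lintegral_measure_le_lt_top {α : Type*} [MeasurableSpace α] {μ : Measure α}
    {f : α → ℝ} (hf : Integrable f μ) (hf0 : 0 ≤ᵐ[μ] f) :
    ∫⁻ s in Ioi 0, μ {a | s ≤ f a} < ⊤ :=
  lintegral_eq_lintegral_meas_le μ hf0 hf.aemeasurable ▸ hf.lintegral_lt_top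

theorem integrableOn_levelLength (hζ : ∀ t, 0 ≤ ζ t) (hint : IntegrableOn ζ (Ioi 0)) :
    IntegrableOn (levelLength ζ) (Ioi 0) :=
  integrable_toReal_of_lintegral_ne_top
    (Antitone.measurable (f := fun s => volume.restrict (Ioi 0) {t | s ≤ ζ t})
      fun _ _ hst => measure_mono fun _ ht => hst.trans ht).aemeasurable
    (lintegral_measure_le_lt_top hint (ae_of_all _ hζ)).ne

theorem measure_setOf_le_ne_top (hint : IntegrableOn ζ (Ioi 0)) {s : ℝ} (hs : 0 < s) :
    volume.restrict (Ioi 0) {t | s ≤ ζ t} ≠ ⊤ :=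
  (measure_mono fun _ ht => ht.trans (Real.le_norm_self _)).trans_lt
    (hint.measure_norm_ge_lt_top hs) |>.ne

theorem exists_lt_of_integrableOn (hint : IntegrableOn ζ (Ioi 0)) {s : ℝ} (hs : 0 < s) :
    ∃ t, ζ t < s := by
  by_contra! h
  apply measure_setOf_le_ne_top hint hs
  rw [show {t | s ≤ ζ t} = univ from eq_univ_of_forall h]
  simp

theorem le_levelLength (hanti : Antitone ζ) (hint : IntegrableOn ζ (Ioi 0)) {s r : ℝ}
    (hs : 0 < s) (hr : s ≤ ζ r) : r ≤ levelLength ζ s := by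
  have hsub : Ioc 0 r ⊆ {t | s ≤ ζ t} := fun t ht => hr.trans (hanti ht.2)
  have := measure_mono (μ := volume.restrict (Ioi 0)) hsub
  rw [Measure.restrict_apply' measurableSet_Ioi, inter_eq_left.2 Ioc_subset_Ioi_self,
    Real.volume_Ioc, sub_zero] at this
  exact (ENNReal.ofReal_le_iff_le_toReal (measure_setOf_le_ne_top hint hs)).1 this

end Weight

section Superlevel

variable {X : Type*} {ζ : ℝ → ℝ}

def zetaSuperlevel (ζ : ℝ → ℝ) (u : X → EReal) (s : ℝ) : Set X := {x | s ≤ zeval ζ (u x)}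

theorem zetaSuperlevel_antitone (u : X → EReal) : Antitone (zetaSuperlevel ζ u) :=
  fun _ _ hst _ hx => hst.trans hx

theorem zetaSuperlevel_eq_biInter (hanti : StrictAnti ζ) (hcont : Continuous ζ)
    {u : X → EReal} (hbot : ∀ x, u x ≠ ⊥) {s : ℝ} (hs : 0 < s) (hex : ∃ t, ζ t < s) :
    zetaSuperlevel ζ u s = ⋂ (t : ℝ) (_ : ζ t < s), {x | u x ≤ t} := by
  ext x
  simp only [zetaSuperlevel, mem_ofPred_eq, le_zeval_iff hs (hbot x), mem_iInter]
  constructor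
  · rintro ⟨r, hr, hsr⟩ t ht
    exact hr ▸ EReal.coe_le_coe_iff.2 (hanti.lt_iff_gt.1 (ht.trans_le hsr)).le
  · intro h
    obtain ⟨t₀, ht₀⟩ := hex
    obtain ⟨r, hr⟩ : ∃ r : ℝ, u x = r :=
      ⟨(u x).toReal, (EReal.coe_toReal (ne_top_of_le_ne_top (EReal.coe_ne_top t₀) (h t₀ ht₀))
        (hbot x)).symm⟩
    refine ⟨r, hr, not_lt.1 fun hrs => ?_⟩
    -- continuity lets the level drop slightly below `r` while `ζ` stays below `s`
    obtain ⟨r', hr', hζr'⟩ := ((hcont.tendsto r).eventually (gt_mem_nhds hrs)).exists_lt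
    exact (EReal.coe_lt_coe_iff.2 hr').not_ge (hr ▸ h r' hζr')

theorem isClosed_zetaSuperlevel [TopologicalSpace X] (hanti : StrictAnti ζ)
    (hcont : Continuous ζ) (hint : IntegrableOn ζ (Ioi 0)) {u : X → EReal}
    (hbot : ∀ x, u x ≠ ⊥) (hlsc : LowerSemicontinuous u) {s : ℝ} (hs : 0 < s) :
    IsClosed (zetaSuperlevel ζ u s) := by
  rw [zetaSuperlevel_eq_biInter hanti hcont hbot hs (exists_lt_of_integrableOn hint hs)]
  exact isClosed_biInter fun t _ => hlsc.isClosed_preimage t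

theorem zetaSuperlevel_eq_empty (hanti : Antitone ζ) {u : X → EReal} {m : ℝ}
    (hm : ∀ x, (m : EReal) ≤ u x) {s : ℝ} (hs : 0 < s) (hsm : ζ m < s) :
    zetaSuperlevel ζ u s = ∅ := by
  refine eq_empty_of_forall_notMem fun x hx => ?_
  obtain ⟨r, hr, hsr⟩ := (le_zeval_iff hs (ne_bot_of_le_ne_bot (EReal.coe_ne_bot m) (hm x))).1 hx
  have hmr : m ≤ r := EReal.coe_le_coe_iff.1 (hr ▸ hm x)
  exact (hsr.trans (hanti hmr)).not_gt hsm

end Superlevel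

section LinearGrowth

variable {n : ℕ} {u : En n → EReal}

theorem le_of_convex_epiSet (hconv : Convex ℝ (epiSet u)) {x₀ : En n} {c R : ℝ} (hR : 0 < R)
    (hx₀ : u x₀ = c) (hsphere : ∀ y, ‖y - x₀‖ = R → ((c + 1 : ℝ) : EReal) < u y)
    (hbot : ∀ x, u x ≠ ⊥) {x : En n} (hx : R ≤ ‖x - x₀‖) :
    ((c + ‖x - x₀‖ / R : ℝ) : EReal) ≤ u x := by
  obtain hxtop | hxtop := eq_or_ne (u x) ⊤
  · exact hxtop ▸ le_top
  set d := ‖x - x₀‖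
  set m := (u x).toReal
  have hm : u x = m := (EReal.coe_toReal hxtop (hbot x)).symm
  have hd : 0 < d := hR.trans_le hx
  set θ := R / d
  have hθ : 0 < θ := div_pos hR hd
  have hθ1 : θ ≤ 1 := (div_le_one hd).2 hx
  have hy : ‖((1 - θ) • x₀ + θ • x) - x₀‖ = R := by
    rw [show (1 - θ) • x₀ + θ • x - x₀ = θ • (x - x₀) by module, norm_smul,
      Real.norm_of_nonneg hθ.le, div_mul_cancel₀ R hd.ne']
  have hcomb := hconv (show (x₀, c) ∈ epiSet u by simp [epiSet, hx₀])
    (show (x, m) ∈ epiSet u by simp [epiSet, hm]) (sub_nonneg.2 hθ1) hθ.le (by ring)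
  simp only [epiSet, mem_ofPred_eq, Prod.smul_mk, Prod.mk_add_mk, smul_eq_mul] at hcomb
  -- `u` exceeds `c + 1` on the sphere of radius `R` but lies below the chord from `(x₀, c)`
  have hchord : c + 1 < (1 - θ) * c + θ * m :=
    EReal.coe_lt_coe_iff.1 ((hsphere _ hy).trans_le hcomb)
  have : d < R * (m - c) := by
    have : 1 < R / d * (m - c) := by nlinarith
    rwa [div_mul_eq_mul_div, one_lt_div hd] at this
  rw [hm, EReal.coe_le_coe_iff]
  have : d / R < m - c := (div_lt_iff₀' hR).2 this
  linarith

theorem ConvC.exists_affine_le (hu : ConvC n u) :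
    ∃ a > 0, ∃ b : ℝ, ∀ x, ((a * ‖x‖ + b : ℝ) : EReal) ≤ u x := by
  obtain ⟨hbot, ⟨x₀, hx₀⟩, hlsc, hconv, hcoer⟩ := hu
  set c := (u x₀).toReal
  have hc : u x₀ = c := (EReal.coe_toReal hx₀ (hbot x₀)).symm
  obtain ⟨R₀, -, hR₀⟩ := (hasBasis_cobounded_compl_closedBall x₀).eventually_iff.1
    (cobounded_eq_cocompact (α := En n) ▸
      hcoer.eventually (Ioi_mem_nhds (EReal.coe_lt_top (c + 1))))
  set R := max R₀ 0 + 1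
  have hR : 0 < R := by positivity
  have hfar : ∀ y, ‖y - x₀‖ = R → ((c + 1 : ℝ) : EReal) < u y := fun y hy =>
    hR₀ (by rw [mem_compl_iff, mem_closedBall, dist_eq_norm, hy]; linarith [le_max_left R₀ 0])
  obtain ⟨z, -, hz⟩ := (hlsc.lowerSemicontinuousOn _).exists_isMinOn
    (nonempty_closedBall.2 hR.le) (isCompact_closedBall x₀ R)
  set m := (u z).toReal
  refine ⟨1 / R, by positivity, min c m - (‖x₀‖ + R) / R, fun x => ?_⟩
  have hnorm : ‖x‖ - ‖x₀‖ ≤ ‖x - x₀‖ := norm_sub_norm_le x x₀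
  by_cases hx : R ≤ ‖x - x₀‖
  · refine le_trans (EReal.coe_le_coe_iff.2 ?_) (le_of_convex_epiSet hconv hR hc hfar hbot hx)
    have : (‖x‖ - ‖x₀‖ - R) / R ≤ ‖x - x₀‖ / R := by gcongr; linarith
    have : 1 / R * ‖x‖ + (min c m - (‖x₀‖ + R) / R) = (‖x‖ - ‖x₀‖ - R) / R + min c m := by
      field_simp; ring
    linarith [min_le_left c m]
  · have hball : x ∈ closedBall x₀ R := by
      rw [mem_closedBall, dist_eq_norm]; exact (not_le.1 hx).le
    refine le_trans (EReal.coe_le_coe_iff.2 ?_) ((EReal.coe_toReal_le (hbot z)).trans (hz hball))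
    have : 1 / R * ‖x‖ ≤ (‖x₀‖ + R) / R := by
      rw [one_div_mul_eq_div]; gcongr; linarith
    linarith [min_le_right c m]

end LinearGrowth

section Integrability

variable {n : ℕ} {ζ : ℝ → ℝ} {u v : En n → EReal}

theorem zetaSuperlevel_subset_closedBall (hanti : Antitone ζ) (hint : IntegrableOn ζ (Ioi 0))
    {a b : ℝ} (ha : 0 < a) (hu : ∀ x, ((a * ‖x‖ + b : ℝ) : EReal) ≤ u x) {s : ℝ} (hs : 0 < s) :
    zetaSuperlevel ζ u s ⊆ closedBall 0 ((levelLength ζ s - b) / a) := by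
  intro x hx
  obtain ⟨r, hr, hsr⟩ := (le_zeval_iff hs (ne_bot_of_le_ne_bot (EReal.coe_ne_bot _) (hu x))).1 hx
  have hxr : a * ‖x‖ + b ≤ r := EReal.coe_le_coe_iff.1 (hr ▸ hu x)
  have hrs := le_levelLength hanti hint hs hsr
  rw [mem_closedBall_zero_iff, le_div_iff₀ ha]
  linarith

theorem isBounded_zetaSuperlevel (hanti : Antitone ζ) (hint : IntegrableOn ζ (Ioi 0))
    (hu : ConvC n u) {s : ℝ} (hs : 0 < s) : IsBounded (zetaSuperlevel ζ u s) :=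
  have ⟨_, ha, _, hab⟩ := hu.exists_affine_le
  isBounded_closedBall.subset (zetaSuperlevel_subset_closedBall hanti hint ha hab hs)

theorem ConvC.exists_common_affine_le (hu : ConvC n u) (hv : ConvC n v) :
    ∃ a > 0, ∃ b ≤ 0, (∀ x, ((a * ‖x‖ + b : ℝ) : EReal) ≤ u x) ∧
      ∀ x, ((a * ‖x‖ + b : ℝ) : EReal) ≤ v x := by
  obtain ⟨a₁, ha₁, b₁, hu'⟩ := hu.exists_affine_le
  obtain ⟨a₂, ha₂, b₂, hv'⟩ := hv.exists_affine_le
  have weaken : ∀ {w : En n → EReal} {a' b' : ℝ}, min a₁ a₂ ≤ a' → min (min b₁ b₂) 0 ≤ b' →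
      (∀ x, ((a' * ‖x‖ + b' : ℝ) : EReal) ≤ w x) →
      ∀ x, ((min a₁ a₂ * ‖x‖ + min (min b₁ b₂) 0 : ℝ) : EReal) ≤ w x :=
    fun ha' hb' h x => (EReal.coe_le_coe_iff.2 (by gcongr)).trans (h x)
  exact ⟨min a₁ a₂, lt_min ha₁ ha₂, min (min b₁ b₂) 0, min_le_right _ _,
    weaken (min_le_left _ _) ((min_le_left _ _).trans (min_le_left _ _)) hu',
    weaken (min_le_right _ _) ((min_le_left _ _).trans (min_le_right _ _)) hv'⟩

theorem dhatH_zetaSuperlevel_le (hanti : Antitone ζ) (hint : IntegrableOn ζ (Ioi 0)) {a b : ℝ}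
    (ha : 0 < a) (hb : b ≤ 0) (hu : ∀ x, ((a * ‖x‖ + b : ℝ) : EReal) ≤ u x)
    (hv : ∀ x, ((a * ‖x‖ + b : ℝ) : EReal) ≤ v x) {s : ℝ} (hs : 0 < s) :
    dhatH (zetaSuperlevel ζ u s) (zetaSuperlevel ζ v s) ≤
      (Ioc 0 (ζ b)).indicator (fun _ => 1 - 2 * b / a) s + 2 / a * levelLength ζ s := by
  have hL : 0 ≤ levelLength ζ s := ENNReal.toReal_nonneg
  by_cases hsb : s ≤ ζ b
  · have hρ : 0 ≤ (levelLength ζ s - b) / a := div_nonneg (by linarith) ha.le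
    rw [indicator_of_mem (show s ∈ Ioc 0 (ζ b) from ⟨hs, hsb⟩)]
    calc dhatH (zetaSuperlevel ζ u s) (zetaSuperlevel ζ v s)
        ≤ 1 + 2 * ((levelLength ζ s - b) / a) := dhatH_le_of_subset_closedBall hρ
          (zetaSuperlevel_subset_closedBall hanti hint ha hu hs)
          (zetaSuperlevel_subset_closedBall hanti hint ha hv hs)
      _ = 1 - 2 * b / a + 2 / a * levelLength ζ s := by ring
  · have hlower : ∀ {w : En n → EReal}, (∀ x, ((a * ‖x‖ + b : ℝ) : EReal) ≤ w x) →
        ∀ x, (b : EReal) ≤ w x := fun h x =>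
      (EReal.coe_le_coe_iff.2 (le_add_of_nonneg_left (by positivity))).trans (h x)
    rw [zetaSuperlevel_eq_empty hanti (hlower hu) hs (not_le.1 hsb),
      zetaSuperlevel_eq_empty hanti (hlower hv) hs (not_le.1 hsb), dhatH_self,
      indicator_of_notMem (fun h : s ∈ Ioc 0 (ζ b) => hsb h.2), zero_add]
    positivity

theorem integrableOn_dhatH_zetaSuperlevel (hζ : ∀ t, 0 ≤ ζ t) (hanti : Antitone ζ)
    (hint : IntegrableOn ζ (Ioi 0)) (hu : ConvC n u) (hv : ConvC n v) :
    IntegrableOn (fun s => dhatH (zetaSuperlevel ζ u s) (zetaSuperlevel ζ v s)) (Ioi 0) := by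
  obtain ⟨a, ha, b, hb, hu', hv'⟩ := hu.exists_common_affine_le hv
  have hg : IntegrableOn (fun s => (Ioc 0 (ζ b)).indicator (fun _ => 1 - 2 * b / a) s +
      2 / a * levelLength ζ s) (Ioi 0) :=
    ((integrable_indicator_iff measurableSet_Ioc).2
      (integrableOn_const measure_Ioc_lt_top.ne)).integrableOn.add
      ((integrableOn_levelLength hζ hint).const_mul _)
  refine hg.mono' (measurable_dhatH_of_antitone (zetaSuperlevel_antitone u)
    (zetaSuperlevel_antitone v)).aestronglyMeasurable
    (ae_restrict_of_forall_mem measurableSet_Ioi fun s hs => ?_)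
  rw [Real.norm_of_nonneg (dhatH_nonneg _ _)]
  exact dhatH_zetaSuperlevel_le hanti hint ha hb hu' hv' hs

end Integrability

theorem le_of_ae_superlevel_eq {X : Type*} {f g : X → ℝ} (hg : 0 ≤ g)
    (h : ∀ᵐ s ∂volume.restrict (Ioi 0), {x | s ≤ f x} = {x | s ≤ g x}) : f ≤ g := by
  intro x
  by_contra! hlt
  obtain ⟨s, hs, hfg⟩ := Measure.exists_mem_of_measure_ne_zero_of_ae (s := Ioo (g x) (f x))
    (by simp [hlt]) (ae_restrict_of_ae_restrict_of_subset (fun s hs => (hg x).trans_lt hs.1) h)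
  have hx : x ∈ {x | s ≤ g x} := hfg ▸ hs.2.le
  exact hs.1.not_ge hx

theorem eq_of_ae_superlevel_eq {X : Type*} {f g : X → ℝ} (hf : 0 ≤ f) (hg : 0 ≤ g)
    (h : ∀ᵐ s ∂volume.restrict (Ioi 0), {x | s ≤ f x} = {x | s ≤ g x}) : f = g :=
  le_antisymm (le_of_ae_superlevel_eq hg h) (le_of_ae_superlevel_eq hf (h.mono fun _ hs => hs.symm))

section Metric

variable {n : ℕ} {ζ : ℝ → ℝ} {u v w : En n → EReal}

theorem deltaH_eq_integral (ζ : ℝ → ℝ) (u v : En n → EReal) :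
    deltaH ζ u v = ∫ s in Ioi 0, dhatH (zetaSuperlevel ζ u s) (zetaSuperlevel ζ v s) := rfl

theorem deltaH_nonneg (ζ : ℝ → ℝ) (u v : En n → EReal) : 0 ≤ deltaH ζ u v :=
  integral_nonneg fun _ => dhatH_nonneg _ _

theorem deltaH_comm (ζ : ℝ → ℝ) (u v : En n → EReal) : deltaH ζ u v = deltaH ζ v u := by
  simp only [deltaH_eq_integral]
  exact congrArg _ (funext fun _ => dhatH_comm _ _)

theorem deltaH_triangle (hζ : ∀ t, 0 ≤ ζ t) (hanti : Antitone ζ)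
    (hint : IntegrableOn ζ (Ioi 0)) (hu : ConvC n u) (hv : ConvC n v) (hw : ConvC n w) :
    deltaH ζ u w ≤ deltaH ζ u v + deltaH ζ v w := by
  have huv := integrableOn_dhatH_zetaSuperlevel hζ hanti hint hu hv
  have hvw := integrableOn_dhatH_zetaSuperlevel hζ hanti hint hv hw
  simp only [deltaH_eq_integral]
  rw [← integral_add huv hvw]
  refine setIntegral_mono_on (integrableOn_dhatH_zetaSuperlevel hζ hanti hint hu hw)
    (huv.add hvw) measurableSet_Ioi fun s hs => dhatH_triangle ?_ ?_ ?_
  all_goals exact isBounded_zetaSuperlevel hanti hint ‹_› hs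

theorem deltaH_eq_zero_iff (hpos : ∀ t, 0 < ζ t) (hcont : Continuous ζ) (hanti : StrictAnti ζ)
    (hint : IntegrableOn ζ (Ioi 0)) (hu : ConvC n u) (hv : ConvC n v) :
    deltaH ζ u v = 0 ↔ u = v := by
  refine ⟨fun h => ?_, fun h => by simp [h, deltaH_eq_integral, dhatH_self]⟩
  have hae := (integral_eq_zero_iff_of_nonneg (fun _ => dhatH_nonneg _ _)
    (integrableOn_dhatH_zetaSuperlevel (fun t => (hpos t).le) hanti.antitone hint hu hv)).1 h
  have hsets : ∀ᵐ s ∂volume.restrict (Ioi 0), zetaSuperlevel ζ u s = zetaSuperlevel ζ v s := by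
    filter_upwards [hae, ae_restrict_mem measurableSet_Ioi] with s hs hs0
    exact eq_of_dhatH_eq_zero (isClosed_zetaSuperlevel hanti hcont hint hu.1 hu.2.2.1 hs0)
      (isClosed_zetaSuperlevel hanti hcont hint hv.1 hv.2.2.1 hs0)
      (isBounded_zetaSuperlevel hanti.antitone hint hu hs0)
      (isBounded_zetaSuperlevel hanti.antitone hint hv hs0) hs
  have hzeval : (fun x => zeval ζ (u x)) = fun x => zeval ζ (v x) :=
    eq_of_ae_superlevel_eq (fun _ => zeval_nonneg (fun t => (hpos t).le) _)
      (fun _ => zeval_nonneg (fun t => (hpos t).le) _) hsets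
  exact funext fun x => zeval_injOn hpos hanti.injective (hu.1 x) (hv.1 x) (congrFun hzeval x)

end Metric

theorem statement16_general (n : ℕ)
    (ζ : ℝ → ℝ) (hζpos : ∀ t, 0 < ζ t) (hζcont : Continuous ζ) (hζanti : StrictAnti ζ)
    (hmom : IntegrableOn ζ (Set.Ioi (0:ℝ))) :
    (∀ u v : En n → EReal, ConvC n u → ConvC n v →
        IntegrableOn (fun s => dhatH {x | s ≤ zeval ζ (u x)} {x | s ≤ zeval ζ (v x)})
          (Set.Ioi (0:ℝ))) ∧
    (∀ u v : En n → EReal, ConvC n u → ConvC n v → 0 ≤ deltaH ζ u v) ∧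
    (∀ u v : En n → EReal, ConvC n u → ConvC n v → deltaH ζ u v = deltaH ζ v u) ∧
    (∀ u v w : En n → EReal, ConvC n u → ConvC n v → ConvC n w →
        deltaH ζ u w ≤ deltaH ζ u v + deltaH ζ v w) ∧
    (∀ u v : En n → EReal, ConvC n u → ConvC n v → (deltaH ζ u v = 0 ↔ u = v)) := by
  have hζ : ∀ t, 0 ≤ ζ t := fun t => (hζpos t).le
  exact ⟨fun u v hu hv => integrableOn_dhatH_zetaSuperlevel hζ hζanti.antitone hmom hu hv,
    fun u v _ _ => deltaH_nonneg ζ u v,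
    fun u v _ _ => deltaH_comm ζ u v,
    fun u v w hu hv hw => deltaH_triangle hζ hζanti.antitone hmom hu hv hw,
    fun u v hu hv => deltaH_eq_zero_iff hζpos hζcont hζanti hmom hu hv⟩

theorem statement16 (n : ℕ) (hn : 1 ≤ n)
    (ζ : ℝ → ℝ) (hζpos : ∀ t, 0 < ζ t) (hζcont : Continuous ζ) (hζanti : StrictAnti ζ)
    (hmom : IntegrableOn ζ (Set.Ioi (0:ℝ))) :
    (∀ u v : En n → EReal, ConvC n u → ConvC n v →
        IntegrableOn (fun s => dhatH {x | s ≤ zeval ζ (u x)} {x | s ≤ zeval ζ (v x)})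
          (Set.Ioi (0:ℝ))) ∧
    (∀ u v : En n → EReal, ConvC n u → ConvC n v → 0 ≤ deltaH ζ u v) ∧
    (∀ u v : En n → EReal, ConvC n u → ConvC n v → deltaH ζ u v = deltaH ζ v u) ∧
    (∀ u v w : En n → EReal, ConvC n u → ConvC n v → ConvC n w →
        deltaH ζ u w ≤ deltaH ζ u v + deltaH ζ v w) ∧
    (∀ u v : En n → EReal, ConvC n u → ConvC n v → (deltaH ζ u v = 0 ↔ u = v)) :=
  statement16_general n ζ hζpos hζcont hζanti hmom
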